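/- arXiv:q-alg/9507014 — 4 statements merged into one kernel-verified Lean document; each statement's English description precedes it below -/
import Mathlib

section
/- For every integer n ≥ 2 and every m = (m_1,…,m_{n−1}) ∈ (ℤ_{≥0})^{n−1}, the number of nodes of the parent associated to m equals n·m^T C^{−1} m, i.e. Σ_{i=1}^N h_i·(w_1+⋯+w_i) = n·Σ_{s,t=1}^{n−1} m_s (C^{−1})_{st} m_t; in particular n·m^T C^{−1} m is a nonnegative integer. -/
/-- The entries of the inverse Cartan matrix of `sl(n)`:
`(C⁻¹)_{ij} = i(n-j)/n` for `i ≤ j` and `(C⁻¹)_{ij} = j(n-i)/n` for `i > j`. -/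
def cinv (n i j : ℕ) : ℚ :=
  if i ≤ j then (i : ℚ) * ((n : ℚ) - (j : ℚ)) / (n : ℚ)
  else (j : ℚ) * ((n : ℚ) - (i : ℚ)) / (n : ℚ)

/-!
Both sides equal `∑_{a,b ≤ N} n·(C⁻¹)_{h_a h_b}`. For the right-hand side this is just grouping
the indices `a` by the value `h_a`. For the left-hand side, split the square `[1,N]²` into the
hooks `{max(a,b) = i}`: since `n·(C⁻¹)_{st} = n·min(s,t) - s·t` and `h` is decreasing, the hook of
`i` contributes `h_i·(n(2i-1) + h_i - 2(h_1 + ⋯ + h_i))`, which telescoping identifies with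
`h_i·(w_1 + ⋯ + w_i)`.
-/

open Finset

theorem Finset.sum_comp_of_maps_to {ι κ M : Type*} [DecidableEq κ] [AddCommMonoid M]
    {s : Finset ι} {t : Finset κ} {g : ι → κ} (hg : ∀ i ∈ s, g i ∈ t) (f : κ → M) :
    ∑ i ∈ s, f (g i) = ∑ j ∈ t, #{i ∈ s | g i = j} • f j := by
  simp_rw [← sum_const, sum_fiberwise_of_maps_to' hg]

theorem Finset.sum_Icc_sum_Icc_eq_sum_hooks {M : Type*} [AddCommGroup M] (F : ℕ → ℕ → M)
    (N : ℕ) :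
    ∑ a ∈ Icc 1 N, ∑ b ∈ Icc 1 N, F a b =
      ∑ i ∈ Icc 1 N, (∑ j ∈ Icc 1 i, F i j + ∑ j ∈ Icc 1 i, F j i - F i i) := by
  induction N with
  | zero => simp
  | succ N ih =>
    simp only [sum_Icc_succ_top (Nat.le_add_left 1 N), sum_add_distrib, ih]
    abel

theorem sum_Icc_eq_of_eq_sub_sub {R : Type*} [CommRing R] {u v : ℕ → R} {c : R} {i : ℕ}
    (hu : ∀ j ∈ Icc 1 i, u j = c - v (j - 1) - v j) :
    ∑ j ∈ Icc 1 i, u j = c * i - v 0 + v i - 2 * ∑ j ∈ Icc 1 i, v j := by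
  induction i with
  | zero => simp
  | succ i ih =>
    have hu' : ∀ j ∈ Icc 1 i, u j = c - v (j - 1) - v j := fun j hj =>
      hu j (Icc_subset_Icc_right i.le_succ hj)
    rw [sum_Icc_succ_top (Nat.le_add_left 1 i), sum_Icc_succ_top (Nat.le_add_left 1 i), ih hu',
      hu (i + 1) (right_mem_Icc.mpr (Nat.le_add_left 1 i)), Nat.add_sub_cancel]
    push_cast
    ring

theorem cinv_comm (n s t : ℕ) : cinv n s t = cinv n t s := by
  unfold cinv
  split_ifs with hst hts hts <;> first | rfl | (obtain rfl := le_antisymm hst hts; rfl) | omega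

theorem mul_cinv {n : ℕ} (hn : n ≠ 0) (s t : ℕ) :
    (n : ℚ) * cinv n s t = n * (min s t : ℕ) - s * t := by
  unfold cinv
  split_ifs with hst
  · rw [min_eq_left hst]
    field_simp
  · rw [min_eq_right (le_of_not_ge hst)]
    field_simp

theorem sum_mul_cinv_of_antitoneOn {n N i : ℕ} {h : ℕ → ℕ} (hn : n ≠ 0)
    (hh : AntitoneOn h (Icc 1 N)) (hi : i ∈ Icc 1 N) :
    ∑ j ∈ Icc 1 i, (n : ℚ) * cinv n (h j) (h i) =
      n * i * h i - h i * ∑ j ∈ Icc 1 i, (h j : ℚ) := by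
  have hmin : ∀ j ∈ Icc 1 i, min (h j) (h i) = h i := fun j hj =>
    min_eq_right <| hh (Icc_subset_Icc_right (mem_Icc.mp hi).2 hj) hi (mem_Icc.mp hj).2
  rw [sum_congr rfl fun j hj => by rw [mul_cinv hn, hmin j hj], sum_sub_distrib, sum_const,
    Nat.card_Icc, Nat.add_sub_cancel, nsmul_eq_mul, mul_sum]
  exact congrArg₂ _ (by ring) (sum_congr rfl fun j _ => by ring)

/-- For every `n ≥ 2` and `m = (m_1, …, m_{n-1}) ∈ (ℤ_{≥0})^{n-1}`, the number
of nodes of the parent associated to `m` equals `n · mᵀ C⁻¹ m`, i.e.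
`Σ_{i=1}^N h_i (w_1 + ⋯ + w_i) = n Σ_{s,t=1}^{n-1} m_s (C⁻¹)_{st} m_t`.
Here `N = m_1 + ⋯ + m_{n-1}`, `(h_1, …, h_N)` is the weakly decreasing sequence containing
each value `i ∈ {1, …, n-1}` exactly `m_i` times, `h_0 = n`, and `w_i = 2n - h_{i-1} - h_i`.
In particular `n · mᵀ C⁻¹ m` is a nonnegative integer (being the number of nodes, a natural
number). -/
theorem parent_node_count (n : ℕ) (hn : 2 ≤ n) (m : ℕ → ℕ)
    (N : ℕ) (hN : N = ∑ i ∈ Finset.Icc 1 (n - 1), m i)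
    (h : ℕ → ℕ) (hh0 : h 0 = n)
    (hdec : ∀ i j : ℕ, 1 ≤ i → i ≤ j → j ≤ N → h j ≤ h i)
    (hcount : ∀ i ∈ Finset.Icc 1 (n - 1),
      ((Finset.Icc 1 N).filter (fun a => h a = i)).card = m i)
    (w : ℕ → ℕ)
    (hw : ∀ i ∈ Finset.Icc 1 N, (w i : ℤ) = 2 * n - h (i - 1) - h i) :
    ((∑ i ∈ Finset.Icc 1 N, h i * ∑ j ∈ Finset.Icc 1 i, w j : ℕ) : ℚ) =
      (n : ℚ) * ∑ s ∈ Finset.Icc 1 (n - 1), ∑ t ∈ Finset.Icc 1 (n - 1),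
        (m s : ℚ) * cinv n s t * (m t : ℚ) := by
  have hn0 : n ≠ 0 := by omega
  have hmaps : ∀ a ∈ Icc 1 N, h a ∈ Icc 1 (n - 1) := by
    refine card_filter_eq_iff.mp ?_
    rw [← sum_card_fiberwise_eq_card_filter, sum_congr rfl hcount, ← hN, Nat.card_Icc,
      Nat.add_sub_cancel]
  have hanti : AntitoneOn h (Icc 1 N) := fun i hi j hj hij =>
    hdec i j (mem_Icc.mp hi).1 hij (mem_Icc.mp hj).2
  have hwq : ∀ j ∈ Icc 1 N, (w j : ℚ) = 2 * n - h (j - 1) - h j := fun j hj => by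
    exact_mod_cast hw j hj
  calc ((∑ i ∈ Icc 1 N, h i * ∑ j ∈ Icc 1 i, w j : ℕ) : ℚ)
      = ∑ i ∈ Icc 1 N, (h i : ℚ) * ∑ j ∈ Icc 1 i, (w j : ℚ) := by push_cast; rfl
    _ = ∑ a ∈ Icc 1 N, ∑ b ∈ Icc 1 N, (n : ℚ) * cinv n (h a) (h b) := by
      rw [sum_Icc_sum_Icc_eq_sum_hooks]
      refine sum_congr rfl fun i hi => ?_
      have hwi : ∀ j ∈ Icc 1 i, (w j : ℚ) = 2 * n - h (j - 1) - h j := fun j hj =>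
        hwq j (Icc_subset_Icc_right (mem_Icc.mp hi).2 hj)
      have hrow : ∑ j ∈ Icc 1 i, (n : ℚ) * cinv n (h i) (h j) =
          ∑ j ∈ Icc 1 i, (n : ℚ) * cinv n (h j) (h i) :=
        sum_congr rfl fun j _ => by rw [cinv_comm]
      rw [sum_Icc_eq_of_eq_sub_sub (v := fun j => (h j : ℚ)) hwi, hrow,
        sum_mul_cinv_of_antitoneOn hn0 hanti hi, mul_cinv hn0, min_self, hh0]
      ring
    _ = (n : ℚ) * ∑ s ∈ Icc 1 (n - 1), ∑ t ∈ Icc 1 (n - 1), (m s : ℚ) * cinv n s t * m t := by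
      simp only [← mul_sum]
      congr 1
      rw [sum_comp_of_maps_to hmaps (fun s => ∑ b ∈ Icc 1 N, cinv n s (h b))]
      refine sum_congr rfl fun s hs => ?_
      rw [sum_comp_of_maps_to hmaps, hcount s hs, nsmul_eq_mul, mul_sum]
      refine sum_congr rfl fun t ht => ?_
      rw [hcount t ht, nsmul_eq_mul]
      ring
end

section
/- Let n ≥ 2, 0 ≤ k ≤ n−1, m = (m_1,…,m_{n−1}) ∈ (ℤ_{≥0})^{n−1} with k + Σ_{t=1}^{n−1} t·m_t ≡ 0 (mod n), and let L ≥ 0 be an integer with L ≡ 2k (mod n) (the case r = n). Then for every 1 ≤ i ≤ n−1: 2·Σ_{j=1}^{i−1} j·m_{i−j} + i·⌊(L + n − i − 2·Σ_{j=1}^{n−1} j·m_{n−j})/n⌋ = L·(C^{−1})_{n−1,i} − 2·(C^{−1}m)_i. -/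
open Finset

lemma dvd_add_two_mul_of_modEq {n k L S : ℕ} (hS : k + S ≡ 0 [MOD n])
    (hL : L ≡ 2 * k [MOD n]) : n ∣ L + 2 * S :=
  Nat.modEq_zero_iff_dvd.mp <| calc
    L + 2 * S ≡ 2 * k + 2 * S [MOD n] := hL.add_right _
    _ = 2 * (k + S) := by ring
    _ ≡ 2 * 0 [MOD n] := hS.mul_left 2

lemma sum_Icc_mul_reflect {R : Type*} [CommSemiring R] {i N : ℕ} (hiN : i ≤ N) (f : ℕ → R) :
    ∑ j ∈ Icc 1 (i - 1), (j : R) * f (i - j) = ∑ t ∈ Icc 1 (N - 1), ((i - t : ℕ) : R) * f t := by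
  have hsub : Icc 1 (i - 1) ⊆ Icc 1 (N - 1) := Icc_subset_Icc_right (by omega)
  rw [← sum_subset hsub fun t ht hti => ?_]
  · refine sum_nbij' (i - ·) (i - ·) ?_ ?_ ?_ ?_ ?_ <;> intro j hj <;>
      simp only [mem_Icc] at hj ⊢
    · omega
    · omega
    · omega
    · omega
    · rw [Nat.sub_sub_self (by omega)]
  · simp only [mem_Icc] at ht hti
    rw [Nat.sub_eq_zero_of_le (by omega), Nat.cast_zero, zero_mul]

lemma Int.floor_intCast_add_sub_div {K : Type*} [Field K] [LinearOrder K] [IsStrictOrderedRing K]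
    [FloorRing K] (z : ℤ) {a b : K} (ha : 0 < a) (hab : a ≤ b) : ⌊(z : K) + (b - a) / b⌋ = z := by
  rw [Int.floor_intCast_add, add_eq_left, Int.floor_eq_zero_iff]
  exact ⟨div_nonneg (by linarith) (by linarith), (div_lt_one (by linarith)).mpr (by linarith)⟩

lemma cinv_eq_sub {n : ℕ} (hn : n ≠ 0) (i t : ℕ) :
    cinv n i t = i * (n - t) / n - ((i - t : ℕ) : ℚ) := by
  unfold cinv
  split_ifs with h
  · simp [Nat.sub_eq_zero_of_le h]
  · rw [Nat.cast_sub (by omega)]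
    field_simp
    ring

lemma cinv_sub_one_left {n i : ℕ} (hin : i < n) : cinv n (n - 1) i = i / n := by
  have hn : (n : ℚ) ≠ 0 := by exact_mod_cast (by omega : n ≠ 0)
  have hn1 : ((n - 1 : ℕ) : ℚ) = n - 1 := by rw [Nat.cast_sub (by omega), Nat.cast_one]
  rw [cinv_eq_sub (by omega), hn1, Nat.cast_sub (by omega), hn1]
  field_simp
  ring

lemma sum_cinv_mul {n : ℕ} (hn : n ≠ 0) (i : ℕ) (s : Finset ℕ) (f : ℕ → ℚ) :
    ∑ t ∈ s, cinv n i t * f t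
      = i * ∑ t ∈ s, f t - i / n * ∑ t ∈ s, t * f t - ∑ t ∈ s, ((i - t : ℕ) : ℚ) * f t := by
  have hn' : (n : ℚ) ≠ 0 := by exact_mod_cast hn
  simp only [mul_sum, ← sum_sub_distrib]
  refine sum_congr rfl fun t _ => ?_
  rw [cinv_eq_sub hn]
  field_simp

theorem ell_formula_r_eq_n_general (n : ℕ) (k : ℕ)
    (m : ℕ → ℕ) (hm : k + ∑ t ∈ Finset.Icc 1 (n - 1), t * m t ≡ 0 [MOD n])
    (L : ℕ) (hL : L ≡ 2 * k [MOD n])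
    (i : ℕ) (hi1 : 1 ≤ i) (hi2 : i ≤ n - 1) :
    2 * (∑ j ∈ Finset.Icc 1 (i - 1), (j : ℚ) * (m (i - j) : ℚ))
      + (i : ℚ) * (⌊((L : ℚ) + (n : ℚ) - (i : ℚ)
          - 2 * ∑ j ∈ Finset.Icc 1 (n - 1), (j : ℚ) * (m (n - j) : ℚ)) / (n : ℚ)⌋ : ℤ)
    = (L : ℚ) * cinv n (n - 1) i
      - 2 * ∑ t ∈ Finset.Icc 1 (n - 1), cinv n i t * (m t : ℚ) := by
  have hin : i < n := by omega
  have hn : n ≠ 0 := by omega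
  obtain ⟨q, hq⟩ := dvd_add_two_mul_of_modEq hm hL
  have hqS : (q : ℚ) = (L + 2 * ∑ t ∈ Icc 1 (n - 1), (t : ℚ) * m t) / n := by
    rw [eq_div_iff (Nat.cast_ne_zero.mpr hn)]
    exact_mod_cast (hq.trans (mul_comm n q)).symm
  set M := ∑ t ∈ Icc 1 (n - 1), (m t : ℚ)
  set S := ∑ t ∈ Icc 1 (n - 1), (t : ℚ) * m t
  have hreflect : ∑ j ∈ Icc 1 (n - 1), (j : ℚ) * m (n - j) = n * M - S := by
    rw [sum_Icc_mul_reflect le_rfl fun t => (m t : ℚ), mul_sum, ← sum_sub_distrib]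
    refine sum_congr rfl fun t ht => ?_
    rw [Nat.cast_sub (by simp only [mem_Icc] at ht; omega)]
    ring
  have hfloor : ⌊(L + n - i - 2 * ∑ j ∈ Icc 1 (n - 1), (j : ℚ) * m (n - j)) / n⌋
      = (q : ℤ) - 2 * ∑ t ∈ Icc 1 (n - 1), (m t : ℤ) := by
    rw [← Int.floor_intCast_add_sub_div ((q : ℤ) - 2 * ∑ t ∈ Icc 1 (n - 1), (m t : ℤ))
      (a := (i : ℚ)) (b := (n : ℚ)) (by exact_mod_cast hi1) (by exact_mod_cast hin.le)]
    congr 1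
    push_cast
    rw [hreflect, hqS]
    field_simp
    ring
  rw [hfloor, cinv_sub_one_left hin, sum_cinv_mul hn, sum_Icc_mul_reflect hin.le fun t => (m t : ℚ)]
  push_cast
  linear_combination (i : ℚ) * hqS

/-- Let `n ≥ 2`, `0 ≤ k ≤ n-1`, `m ∈ (ℤ_{≥0})^{n-1}` with
`k + Σ_{t=1}^{n-1} t m_t ≡ 0 (mod n)`, and `L ≥ 0` with `L ≡ 2k (mod n)` (the case `r = n`).
Then for every `1 ≤ i ≤ n-1`:
`2 Σ_{j=1}^{i-1} j m_{i-j} + i ⌊(L + n - i - 2 Σ_{j=1}^{n-1} j m_{n-j})/n⌋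
  = L (C⁻¹)_{n-1,i} - 2 (C⁻¹ m)_i`. -/
theorem ell_formula_r_eq_n (n : ℕ) (hn : 2 ≤ n) (k : ℕ) (hk : k ≤ n - 1)
    (m : ℕ → ℕ) (hm : k + ∑ t ∈ Finset.Icc 1 (n - 1), t * m t ≡ 0 [MOD n])
    (L : ℕ) (hL : L ≡ 2 * k [MOD n])
    (i : ℕ) (hi1 : 1 ≤ i) (hi2 : i ≤ n - 1) :
    2 * (∑ j ∈ Finset.Icc 1 (i - 1), (j : ℚ) * (m (i - j) : ℚ))
      + (i : ℚ) * (⌊((L : ℚ) + (n : ℚ) - (i : ℚ)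
          - 2 * ∑ j ∈ Finset.Icc 1 (n - 1), (j : ℚ) * (m (n - j) : ℚ)) / (n : ℚ)⌋ : ℤ)
    = (L : ℚ) * cinv n (n - 1) i
      - 2 * ∑ t ∈ Finset.Icc 1 (n - 1), cinv n i t * (m t : ℚ) :=
  ell_formula_r_eq_n_general n k m hm L hL i hi1 hi2
end

section
/- Let n ≥ 2, 0 ≤ k ≤ n−1 and L ≥ 0. The map p ↦ M(p) assigning to each path its interpolating matrix is a bijection from the set of paths P_L(2Λ_0,Λ_k) onto the set G_L(2Λ_0,Λ_k) of interpolating matrices satisfying conditions K1, K2 and K3. -/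
/-- The `i`-th entry `h_i` of the height sequence of an interpolating matrix, `h_0 = n`. -/
def hseq (n : ℕ) (G : List (ℕ × ℕ)) (i : ℕ) : ℕ :=
  if i = 0 then n else (G.getD (i - 1) (0, 0)).2

/-- The `i`-th entry `w_i` (for `1 ≤ i ≤ N`) of the width sequence. -/
def wseq (G : List (ℕ × ℕ)) (i : ℕ) : ℕ := (G.getD (i - 1) (0, 0)).1

/-- `W = w_1 + ⋯ + w_N`. -/
def Wsum (G : List (ℕ × ℕ)) : ℕ := ∑ i ∈ Finset.Icc 1 G.length, wseq G i

/-- `H = h_1 + ⋯ + h_N`. -/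
def Hsum (G : List (ℕ × ℕ)) : ℕ := ∑ i ∈ Finset.Icc 1 G.length, hseq 0 G i

/-- Membership in `G_L(2Λ_0, Λ_k)`: an interpolating matrix (a finite sequence of pairs of
positive integers) satisfying (K1) `W ≤ L`, (K2) `H + k ≡ 0 (mod n)`, and
(K3) `h_{i-1} + w_i + h_i ≡ 0 (mod n)` and `0 < h_i < n` for `1 ≤ i ≤ N` (with `h_0 = n`). -/
def isKG (n L k : ℕ) (G : List (ℕ × ℕ)) : Prop :=
  (∀ p ∈ G, 0 < p.1 ∧ 0 < p.2) ∧
  Wsum G ≤ L ∧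
  (Hsum G + k) % n = 0 ∧
  ∀ i ∈ Finset.Icc 1 G.length,
    (hseq n G (i - 1) + wseq G i + hseq n G i) % n = 0 ∧
    0 < hseq n G i ∧ hseq n G i < n

/-- The set of paths in `P_L(Λ_i + Λ_j, Λ_k)`, encoded by their integer (step-label)
sequences `ι(p) = (μ_0, …, μ_L)`: a path is a sequence `(λ_0, …, λ_L)` of multisets of two
residues mod `n` with `λ_0 = {i,j}`, `λ_L = {k, i+j-k+L}`, in which `λ_{ℓ+1}` is obtained
from `λ_ℓ` by replacing the element `μ_ℓ` by `μ_ℓ + 1`.  By convention `μ_ℓ = i+j-k+L` for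
all `ℓ ≥ L` (in particular `μ_L`, the step towards `λ_{L+1} = {k, i+j-k+L+1}`). -/
def pathSet (n : ℕ) (L : ℕ) (i j k : ZMod n) : Set (ℕ → ZMod n) :=
  { mu | (∀ ℓ : ℕ, L ≤ ℓ → mu ℓ = i + j - k + (L : ZMod n)) ∧
      ∃ lam : ℕ → Multiset (ZMod n),
        lam 0 = {i, j} ∧
        lam L = {k, i + j - k + (L : ZMod n)} ∧
        ∀ ℓ : ℕ, ℓ < L →
          mu ℓ ∈ lam ℓ ∧ lam (ℓ + 1) = (mu ℓ + 1) ::ₘ (lam ℓ).erase (mu ℓ) }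

/-- The ascending list of positions `ℓ ∈ {1,…,L}` of the domain walls of the path with
step sequence `mu`: there is a domain wall of height `h` (`0 < h < n`) at `ℓ` iff
`μ_ℓ - μ_{ℓ-1} ≡ h + 1 (mod n)`, i.e. iff `μ_ℓ - μ_{ℓ-1} - 1 ≢ 0 (mod n)`. -/
def wallPositions (n L : ℕ) (mu : ℕ → ZMod n) : List ℕ :=
  (List.range (L + 1)).filter fun ℓ => decide (1 ≤ ℓ ∧ mu ℓ - mu (ℓ - 1) - 1 ≠ 0)

/-- Turn the list of wall positions `x_1 < x_2 < ⋯ < x_N` (with `prev` the previous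
position, initially `0`) into the interpolating matrix
`((x_1 - prev, h_1), (x_2 - x_1, h_2), …)`, where `h` is the wall height
`h ≡ μ_x - μ_{x-1} - 1 (mod n)`, `0 < h < n`. -/
def mkM (n : ℕ) (mu : ℕ → ZMod n) : List ℕ → ℕ → List (ℕ × ℕ)
  | [], _ => []
  | x :: xs, prev => (x - prev, (mu x - mu (x - 1) - 1).val) :: mkM n mu xs x

/-- The interpolating matrix `M(p)` of a path with step sequence `mu`. -/
def Mmat (n L : ℕ) (mu : ℕ → ZMod n) : List (ℕ × ℕ) :=
  mkM n mu (wallPositions n L mu) 0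

/-!
Every step raises one particle by one, so the two particles of `λ_ℓ` sum to `ℓ`; hence
`λ_ℓ = {μ_ℓ, ℓ - μ_ℓ}`, and a path is just a sequence with `μ_0 = 0` in which each `μ_{ℓ+1}` is
either `μ_ℓ + 1` (no domain wall) or `ℓ - μ_ℓ` (a wall). Right after a wall of height `h` at `p`
the particles differ by `2 μ_p - p ≡ h` (with `h_0 = n` at `p = 0`), so a wall at the next wall
position `x` is allowed exactly when `h_p + (x - p) + h_x ≡ 0`: this is (K3). Condition (K2) is
the telescoped sum of all wall heights, `μ_L - μ_0 - L = -k`, and (K1) says the walls lie in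
`[1, L]`. Conversely, the positions and heights of the walls, which the matrix records,
determine `μ` on `[0, L]`, and any data satisfying (K1)–(K3) arise from a path.
-/

theorem Multiset.pair_eq_pair_sub_of_mem {A : Type*} [AddCommGroup A] {a b x : A}
    (hx : x ∈ ({a, b} : Multiset A)) : ({a, b} : Multiset A) = {x, a + b - x} := by
  simp only [Multiset.insert_eq_cons, Multiset.mem_cons, Multiset.mem_singleton] at hx
  rcases hx with rfl | rfl
  · simp
  · rw [Multiset.pair_comm]; simp

theorem List.lookup_eq_some_of_mem {α β : Type*} [BEq α] [LawfulBEq α] {l : List (α × β)}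
    {a : α} {b : β} (hl : (l.map Prod.fst).Nodup) (h : (a, b) ∈ l) : l.lookup a = some b := by
  induction l with
  | nil => simp at h
  | cons c l ih =>
    obtain ⟨a', b'⟩ := c
    rw [List.map_cons, List.nodup_cons] at hl
    rw [List.lookup_cons]
    rcases List.mem_cons.mp h with hhead | htail
    · obtain ⟨rfl, rfl⟩ := Prod.mk.inj hhead
      simp
    · have hne : (a == a') = false := by
        rw [beq_eq_false_iff_ne]
        rintro rfl
        exact hl.1 (List.mem_map.mpr ⟨_, htail, rfl⟩)
      simp [hne, ih hl.2 htail]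

theorem List.sum_Icc_getD_pred {α M : Type*} [AddCommMonoid M] (l : List α) (f : α → M) (d : α) :
    ∑ i ∈ Finset.Icc 1 l.length, f (l.getD (i - 1) d) = (l.map f).sum := by
  rw [← Finset.Ico_add_one_right_eq_Icc, Finset.sum_Ico_eq_sum_range, Nat.add_sub_cancel,
    Finset.sum_range, ← Fin.sum_univ_fun_getElem]
  refine Finset.sum_congr rfl fun i _ => ?_
  simp

theorem ZMod.natCast_eq_zero_iff_mod_eq_zero {m n : ℕ} : (m : ZMod n) = 0 ↔ m % n = 0 :=
  (ZMod.natCast_eq_zero_iff m n).trans Nat.dvd_iff_mod_eq_zero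

section

variable {n : ℕ}

/-- The height modulo `n` of the domain wall at `ℓ`, or `0` if there is none. -/
def wallHeight (μ : ℕ → ZMod n) (ℓ : ℕ) : ZMod n := μ ℓ - μ (ℓ - 1) - 1

/-- The particles of `λ_{ℓ+1}` are `μ_ℓ + 1` and `ℓ - μ_ℓ`, since those of `λ_ℓ` sum to `ℓ`. -/
def IsAdmissibleStep (μ : ℕ → ZMod n) (ℓ : ℕ) : Prop :=
  μ (ℓ + 1) = μ ℓ + 1 ∨ μ (ℓ + 1) + μ ℓ = ℓ

theorem mem_pathSet_iff {μ : ℕ → ZMod n} {L : ℕ} {c : ZMod n} :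
    μ ∈ pathSet n L 0 0 c ↔
      (∀ ℓ, L ≤ ℓ → μ ℓ = L - c) ∧ μ 0 = 0 ∧ ∀ ℓ < L, IsAdmissibleStep μ ℓ := by
  simp only [pathSet, Set.mem_ofPred_eq, zero_add, zero_sub, neg_add_eq_sub]
  constructor
  · rintro ⟨htail, lam, hlam0, hlamL, hstep⟩
    have hmem : ∀ ℓ ≤ L, μ ℓ ∈ lam ℓ := by
      intro ℓ hℓ
      rcases hℓ.lt_or_eq with hℓ | rfl
      · exact (hstep ℓ hℓ).1
      · simp [hlamL, htail ℓ le_rfl]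
    have hμ0 : μ 0 = 0 := by simpa [hlam0] using hmem 0 (Nat.zero_le L)
    have hlam : ∀ ℓ < L, lam (ℓ + 1) = {μ ℓ + 1, ℓ - μ ℓ} := by
      intro ℓ hℓ
      induction ℓ with
      | zero => simp [(hstep 0 hℓ).2, hlam0, hμ0]
      | succ ℓ ih =>
        have hmem' := hmem (ℓ + 1) hℓ.le
        rw [ih (by omega)] at hmem'
        rw [(hstep _ hℓ).2, ih (by omega), Multiset.pair_eq_pair_sub_of_mem hmem']
        simp only [Multiset.insert_eq_cons, Multiset.erase_cons_head]
        congr 2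
        push_cast
        ring
    refine ⟨htail, hμ0, fun ℓ hℓ => ?_⟩
    have h := hmem (ℓ + 1) hℓ
    rw [hlam ℓ hℓ] at h
    simp only [Multiset.insert_eq_cons, Multiset.mem_cons, Multiset.mem_singleton] at h
    exact h.imp id fun h => by rw [h]; ring
  · rintro ⟨htail, hμ0, hadm⟩
    refine ⟨htail, fun ℓ => {μ ℓ, ℓ - μ ℓ}, by simp [hμ0], ?_, fun ℓ hℓ => ⟨by simp, ?_⟩⟩
    · dsimp only
      rw [htail L le_rfl, Multiset.pair_comm, sub_sub_cancel]
    · dsimp only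
      rw [Multiset.insert_eq_cons, Multiset.insert_eq_cons, Multiset.erase_cons_head,
        ← Multiset.insert_eq_cons]
      rcases hadm ℓ hℓ with h | h
      · rw [h]; congr 2; push_cast; ring
      · rw [eq_sub_of_add_eq h, Multiset.pair_comm]; congr 2; push_cast; ring

theorem wallHeight_succ (μ : ℕ → ZMod n) (ℓ : ℕ) :
    wallHeight μ (ℓ + 1) = μ (ℓ + 1) - μ ℓ - 1 := rfl

theorem wallHeight_succ_eq_zero_iff {μ : ℕ → ZMod n} {ℓ : ℕ} :
    wallHeight μ (ℓ + 1) = 0 ↔ μ (ℓ + 1) = μ ℓ + 1 := by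
  rw [wallHeight_succ, sub_sub, sub_eq_zero]

theorem isAdmissibleStep_of_wallHeight_eq_zero {μ : ℕ → ZMod n} {ℓ : ℕ}
    (h : wallHeight μ (ℓ + 1) = 0) : IsAdmissibleStep μ ℓ :=
  Or.inl (wallHeight_succ_eq_zero_iff.mp h)

theorem eq_add_of_wallHeight_eq_zero {μ : ℕ → ZMod n} {p : ℕ} :
    ∀ {d : ℕ}, (∀ m, p < m → m ≤ p + d → wallHeight μ m = 0) → μ (p + d) = μ p + d
  | 0, _ => by simp
  | d + 1, h => by
    rw [← add_assoc, (wallHeight_succ_eq_zero_iff (ℓ := p + d)).mp (h _ (by omega) le_rfl),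
      eq_add_of_wallHeight_eq_zero fun m hm hmd => h m hm (by omega)]
    push_cast
    ring

theorem eqOn_of_wallHeight_eq {μ ν : ℕ → ZMod n} {L : ℕ} (h0 : μ 0 = ν 0)
    (h : ∀ x, 0 < x → x ≤ L → wallHeight μ x = wallHeight ν x) : ∀ ℓ ≤ L, μ ℓ = ν ℓ
  | 0, _ => h0
  | ℓ + 1, hℓ => by
    have := h (ℓ + 1) ℓ.succ_pos hℓ
    rw [wallHeight_succ, wallHeight_succ, eqOn_of_wallHeight_eq h0 h ℓ (by omega)] at this
    simpa using this

theorem mem_wallPositions {μ : ℕ → ZMod n} {L x : ℕ} :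
    x ∈ wallPositions n L μ ↔ 0 < x ∧ x ≤ L ∧ wallHeight μ x ≠ 0 := by
  simp only [wallPositions, List.mem_filter, List.mem_range, decide_eq_true_eq]
  unfold wallHeight
  constructor <;> rintro ⟨h1, h2, h3⟩ <;> exact ⟨by omega, by omega, h3⟩

theorem pairwise_wallPositions (μ : ℕ → ZMod n) (L : ℕ) :
    (wallPositions n L μ).Pairwise (· < ·) :=
  List.pairwise_lt_range.filter _

theorem zero_cons_pairwise_wallPositions (μ : ℕ → ZMod n) (L : ℕ) :
    (0 :: wallPositions n L μ).Pairwise (· < ·) :=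
  List.pairwise_cons.mpr ⟨fun _ hx => (mem_wallPositions.mp hx).1, pairwise_wallPositions μ L⟩

theorem sum_wallHeight_wallPositions (μ : ℕ → ZMod n) :
    ∀ L, ((wallPositions n L μ).map (wallHeight μ)).sum = μ L - μ 0 - L
  | 0 => by simp [wallPositions]
  | L + 1 => by
    have hlast : (([L + 1].filter fun ℓ => decide (1 ≤ ℓ ∧ μ ℓ - μ (ℓ - 1) - 1 ≠ 0)).map
        (wallHeight μ)).sum = wallHeight μ (L + 1) := by
      by_cases h : wallHeight μ (L + 1) = 0 <;> simp_all [wallHeight]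
    rw [wallPositions, List.range_succ, List.filter_append, ← wallPositions, List.map_append,
      List.sum_append, sum_wallHeight_wallPositions μ L, hlast, wallHeight_succ]
    push_cast
    ring

theorem mkM_cons (μ : ℕ → ZMod n) (x : ℕ) (xs : List ℕ) (p : ℕ) :
    mkM n μ (x :: xs) p = (x - p, (wallHeight μ x).val) :: mkM n μ xs x := rfl

theorem map_snd_mkM (μ : ℕ → ZMod n) :
    ∀ (xs : List ℕ) (p : ℕ), (mkM n μ xs p).map Prod.snd = xs.map fun x => (wallHeight μ x).val
  | [], _ => rfl
  | x :: xs, _ => by rw [mkM_cons, List.map_cons, map_snd_mkM μ xs x, List.map_cons]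

theorem fst_pos_of_mem_mkM (μ : ℕ → ZMod n) :
    ∀ {xs : List ℕ} {p : ℕ}, (p :: xs).Pairwise (· < ·) → ∀ q ∈ mkM n μ xs p, 0 < q.1
  | [], _, _ => by simp [mkM]
  | x :: xs, p, h => by
    rw [List.pairwise_cons] at h
    rintro q (_ | ⟨_, hq⟩)
    · exact Nat.sub_pos_of_lt (h.1 x List.mem_cons_self)
    · exact fst_pos_of_mem_mkM μ h.2 q hq

theorem add_sum_fst_mkM_le (μ : ℕ → ZMod n) {B : ℕ} :
    ∀ {xs : List ℕ} {p : ℕ}, (p :: xs).Pairwise (· < ·) → (∀ x ∈ xs, x ≤ B) → p ≤ B →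
      p + ((mkM n μ xs p).map Prod.fst).sum ≤ B
  | [], _, _, _, hp => by simpa [mkM] using hp
  | x :: xs, p, h, hB, _ => by
    rw [List.pairwise_cons] at h
    have hpx := h.1 x List.mem_cons_self
    have := add_sum_fst_mkM_le μ h.2 (fun y hy => hB y (List.mem_cons_of_mem _ hy))
      (hB x List.mem_cons_self)
    rw [mkM_cons, List.map_cons, List.sum_cons]
    omega

theorem sum_snd_Mmat [NeZero n] (μ : ℕ → ZMod n) (L : ℕ) :
    (((Mmat n L μ).map Prod.snd).sum : ZMod n) = μ L - μ 0 - L := by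
  rw [Mmat, map_snd_mkM, Nat.cast_list_sum, List.map_map, ← sum_wallHeight_wallPositions]
  simp [Function.comp_def]

def K3Rel (n : ℕ) (a b : ℕ × ℕ) : Prop :=
  (a.2 : ZMod n) + b.1 + b.2 = 0 ∧ 0 < b.2 ∧ b.2 < n

theorem bounds_of_isChain_k3Rel : ∀ {a : ℕ × ℕ} {G : List (ℕ × ℕ)},
    List.IsChain (K3Rel n) (a :: G) → ∀ q ∈ G, 0 < q.2 ∧ q.2 < n
  | _, [], _ => by simp
  | _, b :: G, h => by
    rw [List.isChain_cons_cons] at h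
    rintro q (_ | ⟨_, hq⟩)
    · exact h.1.2
    · exact bounds_of_isChain_k3Rel h.2 q hq

theorem isChain_k3Rel_iff_forall_Icc (G : List (ℕ × ℕ)) : List.IsChain (K3Rel n) ((0, n) :: G) ↔
    ∀ i ∈ Finset.Icc 1 G.length,
      (hseq n G (i - 1) + wseq G i + hseq n G i) % n = 0 ∧ 0 < hseq n G i ∧ hseq n G i < n := by
  have hh : ∀ i (hi : i < G.length + 1), hseq n G i = ((0, n) :: G)[i].2 := by
    rintro (_ | i) hi
    · rfl
    · simp [hseq, List.getElem?_eq_getElem (Nat.lt_of_succ_lt_succ hi)]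
  have hw : ∀ i (hi : i < G.length), wseq G (i + 1) = G[i].1 := by
    intro i hi
    simp [wseq, List.getElem?_eq_getElem hi]
  rw [List.isChain_iff_getElem]
  simp only [Finset.mem_Icc, List.length_cons, K3Rel]
  constructor
  · intro h i hi
    obtain ⟨j, rfl⟩ : ∃ j, i = j + 1 := ⟨i - 1, by omega⟩
    have := h j (by omega)
    rw [Nat.add_sub_cancel, hh j (by omega), hh (j + 1) (by omega), hw j (by omega),
      ← ZMod.natCast_eq_zero_iff_mod_eq_zero]
    simpa using this
  · intro h j hj
    have := h (j + 1) (by omega)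
    rw [Nat.add_sub_cancel, hh j (by omega), hh (j + 1) (by omega), hw j (by omega),
      ← ZMod.natCast_eq_zero_iff_mod_eq_zero] at this
    simpa using this

theorem isKG_iff {L k : ℕ} {G : List (ℕ × ℕ)} :
    isKG n L k G ↔ (∀ q ∈ G, 0 < q.1) ∧ (G.map Prod.fst).sum ≤ L ∧
      ((G.map Prod.snd).sum : ZMod n) + k = 0 ∧ List.IsChain (K3Rel n) ((0, n) :: G) := by
  have hW : Wsum G = (G.map Prod.fst).sum := List.sum_Icc_getD_pred G Prod.fst (0, 0)
  have hH : Hsum G = (G.map Prod.snd).sum := by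
    rw [← List.sum_Icc_getD_pred G Prod.snd (0, 0)]
    refine Finset.sum_congr rfl fun i hi => ?_
    rw [hseq, if_neg (Nat.one_le_iff_ne_zero.mp (Finset.mem_Icc.mp hi).1)]
  rw [isKG, hW, hH, ← isChain_k3Rel_iff_forall_Icc, ← ZMod.natCast_eq_zero_iff_mod_eq_zero,
    Nat.cast_add]
  refine ⟨fun ⟨hpos, hW, hK2, hK3⟩ => ⟨fun q hq => (hpos q hq).1, hW, hK2, hK3⟩,
    fun ⟨hpos, hW, hK2, hK3⟩ => ⟨fun q hq => ⟨hpos q hq, ?_⟩, hW, hK2, hK3⟩⟩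
  exact (bounds_of_isChain_k3Rel hK3 q hq).1

/-- `2 μ_x - x` is the difference of the two particles of `λ_x = {μ_x, x - μ_x}`. -/
theorem two_mul_sub_eq_wallHeight {μ : ℕ → ZMod n} {ℓ : ℕ} (h : IsAdmissibleStep μ ℓ)
    (hwall : wallHeight μ (ℓ + 1) ≠ 0) : 2 * μ (ℓ + 1) - (ℓ + 1 : ℕ) = wallHeight μ (ℓ + 1) := by
  rw [IsAdmissibleStep, ← wallHeight_succ_eq_zero_iff, or_iff_right hwall] at h
  rw [wallHeight_succ]
  push_cast
  linear_combination h

theorem isAdmissibleStep_iff_of_wall {μ : ℕ → ZMod n} {p d : ℕ}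
    (hfree : ∀ m, p < m → m ≤ p + d → wallHeight μ m = 0) (hwall : wallHeight μ (p + d + 1) ≠ 0) :
    IsAdmissibleStep μ (p + d) ↔
      2 * μ p - p + (d + 1 : ℕ) + wallHeight μ (p + d + 1) = 0 := by
  have hμ : μ (p + d) = μ p + d := eq_add_of_wallHeight_eq_zero hfree
  rw [IsAdmissibleStep, ← wallHeight_succ_eq_zero_iff, or_iff_right hwall, wallHeight_succ]
  push_cast
  exact ⟨fun h => by linear_combination h - 2 * hμ, fun h => by linear_combination h + 2 * hμ⟩

theorem isChain_k3Rel_mkM_iff [NeZero n] {μ : ℕ → ZMod n} {L : ℕ} :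
    ∀ {xs : List ℕ} {p : ℕ} {a : ℕ × ℕ}, xs.Pairwise (· < ·) →
      (∀ x, x ∈ xs ↔ p < x ∧ x ≤ L ∧ wallHeight μ x ≠ 0) → (a.2 : ZMod n) = 2 * μ p - p →
      (List.IsChain (K3Rel n) (a :: mkM n μ xs p) ↔ ∀ ℓ, p ≤ ℓ → ℓ < L → IsAdmissibleStep μ ℓ)
  | [], p, a, _, hxs, _ => by
    simp only [mkM, List.isChain_singleton, true_iff]
    intro ℓ hpℓ hℓL
    refine isAdmissibleStep_of_wallHeight_eq_zero (not_not.mp fun h => ?_)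
    simpa using (hxs (ℓ + 1)).mpr ⟨by omega, hℓL, h⟩
  | x :: t, p, a, hsort, hxs, ha => by
    obtain ⟨hxt, htsort⟩ := List.pairwise_cons.mp hsort
    obtain ⟨hpx, hxL, hwall⟩ := (hxs x).mp List.mem_cons_self
    obtain ⟨d, rfl⟩ : ∃ d, x = p + d + 1 := ⟨x - p - 1, by omega⟩
    have hfree : ∀ m, p < m → m ≤ p + d → wallHeight μ m = 0 := fun m hpm hmx =>
      not_not.mp fun h => by
        rcases List.mem_cons.mp ((hxs m).mpr ⟨hpm, by omega, h⟩) with rfl | hm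
        · omega
        · exact absurd (hxt m hm) (by omega)
    have ht : ∀ y, y ∈ t ↔ p + d + 1 < y ∧ y ≤ L ∧ wallHeight μ y ≠ 0 := fun y =>
      ⟨fun hy => ⟨hxt y hy, ((hxs y).mp (List.mem_cons_of_mem _ hy)).2⟩,
        fun ⟨h1, h2, h3⟩ => (List.mem_cons.mp ((hxs y).mpr ⟨by omega, h2, h3⟩)).resolve_left
          (by omega)⟩
    have hsplit : (∀ ℓ, p ≤ ℓ → ℓ < L → IsAdmissibleStep μ ℓ) ↔ IsAdmissibleStep μ (p + d) ∧
        ∀ ℓ, p + d + 1 ≤ ℓ → ℓ < L → IsAdmissibleStep μ ℓ := by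
      refine ⟨fun h => ⟨h _ (by omega) (by omega), fun ℓ h1 h2 => h ℓ (by omega) h2⟩, ?_⟩
      rintro ⟨hd, h⟩ ℓ h1 h2
      rcases lt_trichotomy ℓ (p + d) with hl | rfl | hl
      · exact isAdmissibleStep_of_wallHeight_eq_zero (hfree _ (by omega) (by omega))
      · exact hd
      · exact h ℓ hl h2
    rw [mkM_cons, List.isChain_cons_cons, hsplit, K3Rel, isAdmissibleStep_iff_of_wall hfree hwall,
      ← ha, show p + d + 1 - p = d + 1 by omega]
    dsimp only
    rw [ZMod.natCast_zmod_val]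
    simp only [ZMod.val_pos.mpr hwall, ZMod.val_lt, and_true]
    refine and_congr_right fun h => isChain_k3Rel_mkM_iff htsort ht ?_
    rw [ZMod.natCast_zmod_val, two_mul_sub_eq_wallHeight
      ((isAdmissibleStep_iff_of_wall hfree hwall).mpr (ha ▸ h)) hwall]

theorem isChain_k3Rel_Mmat_iff [NeZero n] {μ : ℕ → ZMod n} {L : ℕ} (hμ0 : μ 0 = 0) :
    List.IsChain (K3Rel n) ((0, n) :: Mmat n L μ) ↔ ∀ ℓ < L, IsAdmissibleStep μ ℓ := by
  rw [Mmat, isChain_k3Rel_mkM_iff (pairwise_wallPositions μ L) (fun _ => mem_wallPositions)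
    (by simp [hμ0])]
  exact ⟨fun h ℓ hℓ => h ℓ (Nat.zero_le ℓ) hℓ, fun h ℓ _ hℓ => h ℓ hℓ⟩

theorem mapsTo_Mmat [NeZero n] (L k : ℕ) :
    Set.MapsTo (Mmat n L) (pathSet n L 0 0 k) {G | isKG n L k G} := by
  intro μ hμ
  obtain ⟨htail, hμ0, hadm⟩ := mem_pathSet_iff.mp hμ
  have hsort := zero_cons_pairwise_wallPositions μ L
  refine isKG_iff.mpr ⟨fst_pos_of_mem_mkM μ hsort, ?_, ?_, (isChain_k3Rel_Mmat_iff hμ0).mpr hadm⟩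
  · simpa [Mmat] using add_sum_fst_mkM_le μ hsort (fun x hx => (mem_wallPositions.mp hx).2.1)
      (Nat.zero_le L)
  · rw [sum_snd_Mmat, htail L le_rfl, hμ0]
    ring

def wallCoords : List (ℕ × ℕ) → ℕ → List (ℕ × ℕ)
  | [], _ => []
  | q :: G, p => (p + q.1, q.2) :: wallCoords G (p + q.1)

theorem wallCoords_mkM (μ : ℕ → ZMod n) :
    ∀ {xs : List ℕ} {p : ℕ}, (p :: xs).Pairwise (· < ·) →
      wallCoords (mkM n μ xs p) p = xs.map fun x => (x, (wallHeight μ x).val)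
  | [], _, _ => rfl
  | x :: xs, p, h => by
    rw [List.pairwise_cons] at h
    have hpx := h.1 x List.mem_cons_self
    rw [mkM_cons, wallCoords, Nat.add_sub_cancel' hpx.le, wallCoords_mkM μ h.2, List.map_cons]

theorem pairwise_wallCoords : ∀ {G : List (ℕ × ℕ)} {p : ℕ}, (∀ q ∈ G, 0 < q.1) →
    (p :: (wallCoords G p).map Prod.fst).Pairwise (· < ·)
  | [], _, _ => by simp [wallCoords]
  | q :: G, p, h => by
    have ih := pairwise_wallCoords (p := p + q.1) fun q hq => h q (List.mem_cons_of_mem _ hq)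
    have hq := h q List.mem_cons_self
    rw [wallCoords, List.map_cons, List.pairwise_cons]
    refine ⟨?_, ih⟩
    rintro y (_ | ⟨_, hy⟩)
    · omega
    · exact lt_trans (by omega) ((List.pairwise_cons.mp ih).1 y hy)

theorem le_of_mem_wallCoords : ∀ {G : List (ℕ × ℕ)} {p : ℕ},
    ∀ c ∈ wallCoords G p, c.1 ≤ p + (G.map Prod.fst).sum
  | [], _ => by simp [wallCoords]
  | q :: G, p => by
    rintro c (_ | ⟨_, hc⟩)
    · simp
    · have := le_of_mem_wallCoords c hc
      simp only [List.map_cons, List.sum_cons]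
      omega

theorem map_snd_wallCoords : ∀ (G : List (ℕ × ℕ)) (p : ℕ),
    (wallCoords G p).map Prod.snd = G.map Prod.snd
  | [], _ => rfl
  | q :: G, p => by simp [wallCoords, map_snd_wallCoords G]

theorem mkM_wallCoords (μ : ℕ → ZMod n) :
    ∀ {G : List (ℕ × ℕ)} {p : ℕ}, (∀ c ∈ wallCoords G p, wallHeight μ c.1 = c.2 ∧ c.2 < n) →
      mkM n μ ((wallCoords G p).map Prod.fst) p = G
  | [], _, _ => rfl
  | q :: G, p, h => by
    obtain ⟨hq, hqn⟩ := h _ List.mem_cons_self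
    rw [wallCoords, List.map_cons, mkM_cons, mkM_wallCoords μ fun c hc => h c
      (List.mem_cons_of_mem _ hc), Nat.add_sub_cancel_left]
    dsimp only at hq hqn
    rw [hq, ZMod.val_cast_of_lt hqn]

theorem wallHeight_eq_of_Mmat_eq [NeZero n] {μ ν : ℕ → ZMod n} {L : ℕ}
    (h : Mmat n L μ = Mmat n L ν) : ∀ x, 0 < x → x ≤ L → wallHeight μ x = wallHeight ν x := by
  have hcoords := congrArg (wallCoords · 0) h
  simp only [Mmat] at hcoords
  rw [wallCoords_mkM μ (zero_cons_pairwise_wallPositions μ L),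
    wallCoords_mkM ν (zero_cons_pairwise_wallPositions ν L)] at hcoords
  have hwalls : wallPositions n L μ = wallPositions n L ν := by
    simpa [Function.comp_def] using congrArg (List.map Prod.fst) hcoords
  rw [← hwalls, List.map_inj_left] at hcoords
  intro x hx0 hxL
  by_cases hx : x ∈ wallPositions n L μ
  · exact ZMod.val_injective n (congrArg Prod.snd (hcoords x hx))
  · have hν := hwalls ▸ hx
    rw [mem_wallPositions] at hx hν
    rw [not_not.mp fun h => hx ⟨hx0, hxL, h⟩, not_not.mp fun h => hν ⟨hx0, hxL, h⟩]

theorem injOn_Mmat [NeZero n] (L : ℕ) (c : ZMod n) :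
    Set.InjOn (Mmat n L) (pathSet n L 0 0 c) := by
  intro μ hμ ν hν h
  obtain ⟨hμtail, hμ0, -⟩ := mem_pathSet_iff.mp hμ
  obtain ⟨hνtail, hν0, -⟩ := mem_pathSet_iff.mp hν
  funext ℓ
  rcases le_total ℓ L with hℓ | hℓ
  · exact eqOn_of_wallHeight_eq (hμ0.trans hν0.symm) (wallHeight_eq_of_Mmat_eq h) ℓ hℓ
  · rw [hμtail ℓ hℓ, hνtail ℓ hℓ]

def matrixHeight (n : ℕ) (G : List (ℕ × ℕ)) (x : ℕ) : ZMod n :=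
  (((wallCoords G 0).lookup x).getD 0 : ℕ)

/-- Frozen after time `L`, as the paths of `pathSet` are. -/
def matrixPath (n L : ℕ) (G : List (ℕ × ℕ)) (ℓ : ℕ) : ZMod n :=
  (min ℓ L : ℕ) + ∑ i ∈ Finset.range (min ℓ L + 1), matrixHeight n G i

section matrixPath

variable {L : ℕ} {G : List (ℕ × ℕ)}

theorem matrixHeight_of_mem (hG : ∀ q ∈ G, 0 < q.1) {c : ℕ × ℕ} (hc : c ∈ wallCoords G 0) :
    matrixHeight n G c.1 = c.2 := by
  rw [matrixHeight, List.lookup_eq_some_of_mem (pairwise_wallCoords hG).of_cons.nodup hc]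
  rfl

theorem matrixHeight_of_not_mem {x : ℕ} (hx : x ∉ (wallCoords G 0).map Prod.fst) :
    matrixHeight n G x = 0 := by
  rw [matrixHeight, List.lookup_eq_none_iff.mpr]
  · simp
  · intro c hc
    simpa using fun h : x = c.1 => hx (h ▸ List.mem_map_of_mem hc)

theorem wallHeight_matrixPath {x : ℕ} (hx : 0 < x) (hxL : x ≤ L) :
    wallHeight (matrixPath n L G) x = matrixHeight n G x := by
  obtain ⟨y, rfl⟩ := Nat.exists_eq_succ_of_ne_zero hx.ne'
  rw [wallHeight_succ, matrixPath, matrixPath, min_eq_left hxL, min_eq_left (by omega),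
    Finset.sum_range_succ _ (y + 1)]
  push_cast
  ring

theorem matrixPath_zero (hG : ∀ q ∈ G, 0 < q.1) : matrixPath n L G 0 = 0 := by
  have h0 : (0 : ℕ) ∉ (wallCoords G 0).map Prod.fst := fun h =>
    lt_irrefl 0 ((List.pairwise_cons.mp (pairwise_wallCoords hG)).1 0 h)
  simp [matrixPath, matrixHeight_of_not_mem h0]

theorem matrixPath_of_le {ℓ : ℕ} (hℓ : L ≤ ℓ) :
    matrixPath n L G ℓ = matrixPath n L G L := by
  simp [matrixPath, min_eq_right hℓ]

theorem Mmat_matrixPath (hG : ∀ q ∈ G, 0 < q.1) (hW : (G.map Prod.fst).sum ≤ L)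
    (hK3 : List.IsChain (K3Rel n) ((0, n) :: G)) : Mmat n L (matrixPath n L G) = G := by
  have hsort := pairwise_wallCoords (p := 0) hG
  have hbounds : ∀ c ∈ wallCoords G 0, 0 < c.2 ∧ c.2 < n := by
    intro c hc
    obtain ⟨q, hq, hqc⟩ := List.mem_map.mp
      (map_snd_wallCoords G 0 ▸ List.mem_map_of_mem (f := Prod.snd) hc)
    exact hqc ▸ bounds_of_isChain_k3Rel hK3 q hq
  have hpos : ∀ c ∈ wallCoords G 0, 0 < c.1 ∧ c.1 ≤ L := fun c hc =>
    ⟨(List.pairwise_cons.mp hsort).1 _ (List.mem_map_of_mem hc),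
      (le_of_mem_wallCoords c hc).trans (by omega)⟩
  have hheight : ∀ c ∈ wallCoords G 0, wallHeight (matrixPath n L G) c.1 = c.2 := fun c hc => by
    rw [wallHeight_matrixPath (hpos c hc).1 (hpos c hc).2, matrixHeight_of_mem hG hc]
  have hwalls : wallPositions n L (matrixPath n L G) = (wallCoords G 0).map Prod.fst := by
    refine (pairwise_wallPositions _ _).eq_of_mem_iff hsort.of_cons fun x => ?_
    rw [mem_wallPositions]
    constructor
    · rintro ⟨hx0, hxL, hx⟩
      by_contra h
      exact hx ((wallHeight_matrixPath hx0 hxL).trans (matrixHeight_of_not_mem h))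
    · intro hx
      obtain ⟨c, hc, rfl⟩ := List.mem_map.mp hx
      refine ⟨(hpos c hc).1, (hpos c hc).2, ?_⟩
      rw [hheight c hc, Ne, ZMod.natCast_eq_zero_iff]
      exact Nat.not_dvd_of_pos_of_lt (hbounds c hc).1 (hbounds c hc).2
  rw [Mmat, hwalls]
  exact mkM_wallCoords _ fun c hc => ⟨hheight c hc, (hbounds c hc).2⟩

end matrixPath

theorem surjOn_Mmat [NeZero n] (L k : ℕ) :
    Set.SurjOn (Mmat n L) (pathSet n L 0 0 k) {G | isKG n L k G} := by
  intro G hG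
  obtain ⟨hpos, hW, hK2, hK3⟩ := isKG_iff.mp hG
  have hM := Mmat_matrixPath hpos hW hK3
  have h0 : matrixPath n L G 0 = 0 := matrixPath_zero hpos
  refine ⟨matrixPath n L G, mem_pathSet_iff.mpr ⟨fun ℓ hℓ => ?_, h0, ?_⟩, hM⟩
  · have hsum := sum_snd_Mmat (matrixPath n L G) L
    rw [hM, h0] at hsum
    rw [matrixPath_of_le hℓ]
    linear_combination hK2 - hsum
  · exact (isChain_k3Rel_Mmat_iff h0).mp (by rwa [hM])

end

theorem path_graph_bijection_general (n : ℕ) (hn : 2 ≤ n) (k : ℕ) (L : ℕ) :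
    Set.BijOn (Mmat n L) (pathSet n L 0 0 (k : ZMod n))
      {G : List (ℕ × ℕ) | isKG n L k G} :=
  haveI : NeZero n := ⟨by omega⟩
  ⟨mapsTo_Mmat L k, injOn_Mmat L (k : ZMod n), surjOn_Mmat L k⟩

/-- Let `n ≥ 2`, `0 ≤ k ≤ n-1` and `L ≥ 0`.  The map `p ↦ M(p)` assigning
to each path its interpolating matrix is a bijection from `P_L(2Λ_0, Λ_k)` onto the set
`G_L(2Λ_0, Λ_k)` of interpolating matrices satisfying K1, K2 and K3. -/
theorem path_graph_bijection (n : ℕ) (hn : 2 ≤ n) (k : ℕ) (hk : k ≤ n - 1) (L : ℕ) :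
    Set.BijOn (Mmat n L) (pathSet n L 0 0 (k : ZMod n))
      {G : List (ℕ × ℕ) | isKG n L k G} :=
  path_graph_bijection_general n hn k L
end

section
/- Let n ≥ 2 and let M = ((w_1,h_1),…,(w_N,h_N)) be an interpolating matrix satisfying condition K3 (with h_0 = n). Call a position j ∈ {1,…,N} a candidate if either (a) h_{j−1}+w_j+h_j = n, j ≥ 2 and w_{j−1} > 1, or (b) h_{j−1}+w_j+h_j = 2n and w_j > 2(n−h_j), or (c) h_{j−1}+w_j+h_j ≥ 3n. Then M has no candidate positions if and only if h_{j−1}+w_j+h_j = 2n and h_{j−1} ≥ h_j for all 1 ≤ j ≤ N, i.e. if and only if M is the parent associated to some m ∈ (ℤ_{≥0})^{n−1}. -/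
/-- Position `j ∈ {1,…,N}` is a *candidate* of the interpolating matrix `G` if either
(a) `h_{j-1} + w_j + h_j = n`, `j ≥ 2` and `w_{j-1} > 1`, or
(b) `h_{j-1} + w_j + h_j = 2n` and `w_j > 2(n - h_j)`, or
(c) `h_{j-1} + w_j + h_j ≥ 3n`. -/
def isCandidate (n : ℕ) (G : List (ℕ × ℕ)) (j : ℕ) : Prop :=
  (hseq n G (j - 1) + wseq G j + hseq n G j = n ∧ 2 ≤ j ∧ 1 < wseq G (j - 1)) ∨
  (hseq n G (j - 1) + wseq G j + hseq n G j = 2 * n ∧ 2 * (n - hseq n G j) < wseq G j) ∨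
  (3 * n ≤ hseq n G (j - 1) + wseq G j + hseq n G j)

/-- `G` is the parent associated to `m = (m_1,…,m_{n-1}) ∈ (ℤ_{≥0})^{n-1}`:
its length is `N = m_1 + ⋯ + m_{n-1}`, its height sequence `(h_1,…,h_N)` is weakly
decreasing and contains each value `i ∈ {1,…,n-1}` exactly `m_i` times, and
`w_i = 2n - h_{i-1} - h_i` for `1 ≤ i ≤ N` (with `h_0 = n`). -/
def isParent (n : ℕ) (m : ℕ → ℕ) (G : List (ℕ × ℕ)) : Prop :=
  G.length = ∑ t ∈ Finset.Icc 1 (n - 1), m t ∧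
  (∀ i j : ℕ, 1 ≤ i → i ≤ j → j ≤ G.length → hseq n G j ≤ hseq n G i) ∧
  (∀ t ∈ Finset.Icc 1 (n - 1),
    ((Finset.Icc 1 G.length).filter (fun a => hseq n G a = t)).card = m t) ∧
  (∀ i ∈ Finset.Icc 1 G.length,
    (wseq G i : ℤ) = 2 * n - hseq n G (i - 1) - hseq n G i)

open Finset

def SatisfiesK3 (n : ℕ) (G : List (ℕ × ℕ)) : Prop :=
  ∀ i ∈ Icc 1 G.length,
    (hseq n G (i - 1) + wseq G i + hseq n G i) % n = 0 ∧ 0 < hseq n G i ∧ hseq n G i < n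

/-- The `m` of which `G` is the parent, when it is one. -/
def heightCount (n : ℕ) (G : List (ℕ × ℕ)) (t : ℕ) : ℕ :=
  ((Icc 1 G.length).filter (fun a => hseq n G a = t)).card

section

variable {n : ℕ} {G : List (ℕ × ℕ)}

@[simp]
lemma hseq_zero : hseq n G 0 = n := rfl

lemma wseq_pos (hpos : ∀ p ∈ G, 0 < p.1) {j : ℕ} (hj : j ∈ Icc 1 G.length) :
    0 < wseq G j := by
  obtain ⟨hj1, hj2⟩ := mem_Icc.mp hj
  apply hpos
  rw [List.getD_eq_getElem _ _ (by omega)]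
  exact List.getElem_mem _

namespace SatisfiesK3

variable (hK3 : SatisfiesK3 n G)
include hK3

lemma hseq_lt {j : ℕ} (hj : j ∈ Icc 1 G.length) : 0 < hseq n G j ∧ hseq n G j < n :=
  (hK3 j hj).2

lemma hseq_le {j : ℕ} (hj : j ≤ G.length) : hseq n G j ≤ n := by
  rcases Nat.eq_zero_or_pos j with rfl | hj0
  · rfl
  · exact (hK3.hseq_lt (mem_Icc.mpr ⟨hj0, hj⟩)).2.le

lemma sum_eq_or_eq_two_mul_of_not_isCandidate {j : ℕ} (hj : j ∈ Icc 1 G.length)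
    (hnc : ¬ isCandidate n G j) :
    hseq n G (j - 1) + wseq G j + hseq n G j = n ∨
      hseq n G (j - 1) + wseq G j + hseq n G j = 2 * n := by
  obtain ⟨k, hk⟩ := Nat.dvd_of_mod_eq_zero (hK3 j hj).1
  have hpos := hK3.hseq_lt hj
  have hlt : n * k < n * 3 := by simp only [isCandidate] at hnc; omega
  have hk3 := Nat.lt_of_mul_lt_mul_left hlt
  interval_cases k <;> omega

/-- A row sum `n` at `j ≥ 2` is ruled out since `w_{j-1} ≤ 1` (no candidate of type (a)) and the
row sum `2n` at `j - 1` force `h_{j-1} = n - 1`, so that the row sum at `j` exceeds `n`. -/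
lemma sum_eq_two_mul_of_not_isCandidate {j : ℕ} (hj : j ∈ Icc 1 G.length) (hw : 0 < wseq G j)
    (hprev : 2 ≤ j → hseq n G (j - 2) + wseq G (j - 1) + hseq n G (j - 1) = 2 * n)
    (hnc : ¬ isCandidate n G j) :
    hseq n G (j - 1) + wseq G j + hseq n G j = 2 * n := by
  obtain ⟨hj1, hj2⟩ := mem_Icc.mp hj
  refine (hK3.sum_eq_or_eq_two_mul_of_not_isCandidate hj hnc).resolve_left fun hsum => ?_
  have hpos := hK3.hseq_lt hj
  rcases Nat.lt_or_ge j 2 with hj2 | hj2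
  · obtain rfl : j = 1 := by omega
    simp only [Nat.sub_self, hseq_zero] at hsum
    omega
  · have hle := hK3.hseq_le (j := j - 2) (by omega)
    have hlt := hK3.hseq_lt (j := j - 1) (mem_Icc.mpr ⟨by omega, by omega⟩)
    simp only [isCandidate] at hnc
    have := hprev hj2
    omega

lemma sum_eq_two_mul_of_forall_not_isCandidate (hw : ∀ i ∈ Icc 1 G.length, 0 < wseq G i)
    (hnc : ∀ j ∈ Icc 1 G.length, ¬ isCandidate n G j) :
    ∀ j ∈ Icc 1 G.length, hseq n G (j - 1) + wseq G j + hseq n G j = 2 * n := by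
  intro j
  induction j with
  | zero => simp
  | succ j ih =>
    intro hj
    have hj' := mem_Icc.mp hj
    refine hK3.sum_eq_two_mul_of_not_isCandidate hj (hw _ hj) (fun hj2 => ?_) (hnc _ hj)
    simpa using ih (mem_Icc.mpr ⟨by omega, by omega⟩)

end SatisfiesK3

lemma hseq_le_of_not_isCandidate {j : ℕ} (hlt : hseq n G j < n)
    (hsum : hseq n G (j - 1) + wseq G j + hseq n G j = 2 * n) (hnc : ¬ isCandidate n G j) :
    hseq n G j ≤ hseq n G (j - 1) := by
  simp only [isCandidate] at hnc
  omega

lemma not_isCandidate_of_sum_eq {j : ℕ} (hlt : hseq n G j < n)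
    (hsum : hseq n G (j - 1) + wseq G j + hseq n G j = 2 * n)
    (hle : hseq n G j ≤ hseq n G (j - 1)) : ¬ isCandidate n G j := by
  rintro (⟨h, -, -⟩ | ⟨-, h⟩ | h) <;> omega

lemma SatisfiesK3.forall_not_isCandidate_iff (hK3 : SatisfiesK3 n G)
    (hw : ∀ i ∈ Icc 1 G.length, 0 < wseq G i) :
    (∀ j ∈ Icc 1 G.length, ¬ isCandidate n G j) ↔
      ∀ j ∈ Icc 1 G.length,
        hseq n G (j - 1) + wseq G j + hseq n G j = 2 * n ∧ hseq n G j ≤ hseq n G (j - 1) := by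
  constructor
  · intro hnc j hj
    have hsum := hK3.sum_eq_two_mul_of_forall_not_isCandidate hw hnc j hj
    exact ⟨hsum, hseq_le_of_not_isCandidate (hK3.hseq_lt hj).2 hsum (hnc j hj)⟩
  · intro h j hj
    exact not_isCandidate_of_sum_eq (hK3.hseq_lt hj).2 (h j hj).1 (h j hj).2

lemma antitoneOn_hseq (hle : ∀ j ∈ Icc 1 G.length, hseq n G j ≤ hseq n G (j - 1)) :
    AntitoneOn (hseq n G) (Set.Icc 0 G.length) :=
  antitoneOn_of_add_one_le Set.ordConnected_Icc fun a _ _ ha =>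
    hle (a + 1) (by simpa using ha)

lemma SatisfiesK3.isParent_heightCount (hK3 : SatisfiesK3 n G)
    (h : ∀ j ∈ Icc 1 G.length,
      hseq n G (j - 1) + wseq G j + hseq n G j = 2 * n ∧ hseq n G j ≤ hseq n G (j - 1)) :
    isParent n (heightCount n G) G := by
  have hmaps : ∀ a ∈ Icc 1 G.length, hseq n G a ∈ Icc 1 (n - 1) := fun a ha => by
    have := hK3.hseq_lt ha
    exact mem_Icc.mpr ⟨by omega, by omega⟩
  refine ⟨?_, fun i j hi hij hj => ?_, fun _ _ => rfl, fun i hi => ?_⟩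
  · simpa [heightCount] using card_eq_sum_card_fiberwise hmaps
  · exact antitoneOn_hseq (fun j hj => (h j hj).2)
      (Set.mem_Icc.mpr ⟨by omega, by omega⟩) (Set.mem_Icc.mpr ⟨by omega, hj⟩) hij
  · have := (h i hi).1
    omega

lemma SatisfiesK3.one_le_and_le_sub_one_of_heightCount_ne_zero (hK3 : SatisfiesK3 n G) {t : ℕ}
    (ht : heightCount n G t ≠ 0) : 1 ≤ t ∧ t ≤ n - 1 := by
  obtain ⟨a, ha⟩ := card_ne_zero.mp ht
  obtain ⟨haI, rfl⟩ := mem_filter.mp ha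
  have := hK3.hseq_lt haI
  omega

lemma SatisfiesK3.sum_eq_and_hseq_le_of_isParent (hK3 : SatisfiesK3 n G) {m : ℕ → ℕ}
    (hm : isParent n m G) :
    ∀ j ∈ Icc 1 G.length,
      hseq n G (j - 1) + wseq G j + hseq n G j = 2 * n ∧ hseq n G j ≤ hseq n G (j - 1) := by
  obtain ⟨-, hmono, -, hw⟩ := hm
  intro j hj
  obtain ⟨hj1, hj2⟩ := mem_Icc.mp hj
  have hwj := hw j hj
  refine ⟨by omega, ?_⟩
  rcases Nat.lt_or_ge j 2 with hj2' | hj2'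
  · obtain rfl : j = 1 := by omega
    exact hK3.hseq_le hj2
  · exact hmono (j - 1) j (by omega) (by omega) hj2

end

theorem parent_characterization_general (n : ℕ) (G : List (ℕ × ℕ))
    (hpos : ∀ p ∈ G, 0 < p.1 ∧ 0 < p.2)
    (hK3 : ∀ i ∈ Finset.Icc 1 G.length,
      (hseq n G (i - 1) + wseq G i + hseq n G i) % n = 0 ∧
      0 < hseq n G i ∧ hseq n G i < n) :
    ((∀ j ∈ Finset.Icc 1 G.length, ¬ isCandidate n G j) ↔
      (∀ j ∈ Finset.Icc 1 G.length,
        hseq n G (j - 1) + wseq G j + hseq n G j = 2 * n ∧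
        hseq n G j ≤ hseq n G (j - 1))) ∧
    ((∀ j ∈ Finset.Icc 1 G.length, ¬ isCandidate n G j) ↔
      ∃ m : ℕ → ℕ, (∀ t, m t ≠ 0 → 1 ≤ t ∧ t ≤ n - 1) ∧ isParent n m G) := by
  have hK3 : SatisfiesK3 n G := hK3
  have hcand := hK3.forall_not_isCandidate_iff fun j => wseq_pos fun p hp => (hpos p hp).1
  refine ⟨hcand, hcand.trans ⟨fun h => ?_, fun ⟨_, _, hm⟩ => ?_⟩⟩
  · exact ⟨heightCount n G, fun _ => hK3.one_le_and_le_sub_one_of_heightCount_ne_zero,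
      hK3.isParent_heightCount h⟩
  · exact hK3.sum_eq_and_hseq_le_of_isParent hm

/-- Let `n ≥ 2` and let `G = ((w_1,h_1),…,(w_N,h_N))` be an interpolating
matrix (pairs of positive integers) satisfying condition K3 (with `h_0 = n`).  Then `G` has
no candidate positions iff `h_{j-1} + w_j + h_j = 2n` and `h_{j-1} ≥ h_j` for all
`1 ≤ j ≤ N`, i.e. iff `G` is the parent associated to some `m ∈ (ℤ_{≥0})^{n-1}`. -/
theorem parent_characterization (n : ℕ) (hn : 2 ≤ n) (G : List (ℕ × ℕ))
    (hpos : ∀ p ∈ G, 0 < p.1 ∧ 0 < p.2)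
    (hK3 : ∀ i ∈ Finset.Icc 1 G.length,
      (hseq n G (i - 1) + wseq G i + hseq n G i) % n = 0 ∧
      0 < hseq n G i ∧ hseq n G i < n) :
    ((∀ j ∈ Finset.Icc 1 G.length, ¬ isCandidate n G j) ↔
      (∀ j ∈ Finset.Icc 1 G.length,
        hseq n G (j - 1) + wseq G j + hseq n G j = 2 * n ∧
        hseq n G j ≤ hseq n G (j - 1))) ∧
    ((∀ j ∈ Finset.Icc 1 G.length, ¬ isCandidate n G j) ↔
      ∃ m : ℕ → ℕ, (∀ t, m t ≠ 0 → 1 ≤ t ∧ t ≤ n - 1) ∧ isParent n m G) :=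
  parent_characterization_general n G hpos hK3
end
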